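/- For every integer m ≥ 2 and every real t with 0 ≤ t ≤ 2, the terminating hypergeometric polynomial F_m(t) = Σ_{k=0}^{m−1} [(5/2)_k · (1−m)_k / ((2−4m)_k · k!)] · t^k satisfies |F_m(t)| ≤ 9√3 · (3−t)^{-5/2}. -/

import Mathlib

/-- Rising factorial (Pochhammer symbol) `(a)_n = a (a+1) ⋯ (a+n−1)`. -/
noncomputable def poch (a : ℝ) (n : ℕ) : ℝ := ∏ i ∈ Finset.range n, (a + i)

/-- The terminating hypergeometric polynomial `₂F₁(5/2, 1−m; 2−4m; t)`. -/
noncomputable def F (m : ℕ) (t : ℝ) : ℝ :=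
  ∑ k ∈ Finset.range m,
    poch (5 / 2) k * poch (1 - (m : ℝ)) k / (poch (2 - 4 * (m : ℝ)) k * (Nat.factorial k : ℝ)) *
      t ^ k

noncomputable def aa (k : ℕ) : ℝ := poch (5/2) k / (Nat.factorial k : ℝ)

noncomputable def S (m : ℕ) (x : ℝ) : ℝ := ∑ k ∈ Finset.range m, aa k * x ^ k

noncomputable def D (m : ℕ) (x : ℝ) : ℝ :=
  ∑ k ∈ Finset.range m, aa k * ((k : ℝ) * x ^ (k - 1))

lemma poch_nonneg (k : ℕ) : 0 ≤ poch (5/2) k := by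
  apply Finset.prod_nonneg; intro i _; positivity

lemma aa_nonneg (k : ℕ) : 0 ≤ aa k := by
  apply div_nonneg (poch_nonneg k)
  exact_mod_cast (Nat.factorial_pos k).le

lemma aa_zero : aa 0 = 1 := by simp [aa, poch]

lemma aa_succ (k : ℕ) : ((k:ℝ)+1) * aa (k+1) = ((k:ℝ) + 5/2) * aa k := by
  have h1 : poch (5/2) (k+1) = poch (5/2) k * (5/2 + k) := Finset.prod_range_succ _ _
  have h2 : (Nat.factorial (k+1) : ℝ) = ((k:ℝ)+1) * Nat.factorial k := by
    push_cast [Nat.factorial_succ]; ring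
  have hf : (Nat.factorial k : ℝ) ≠ 0 := by
    exact_mod_cast (Nat.factorial_pos k).ne'
  have hk1 : ((k:ℝ)+1) ≠ 0 := by positivity
  rw [aa, aa, h1, h2]
  field_simp
  ring

lemma key (n : ℕ) (x : ℝ) :
    (1 - x) * D (n+1) x = 5/2 * S (n+1) x - ((n:ℝ) + 5/2) * aa n * x ^ n := by
  induction n with
  | zero => simp [S, D, aa_zero]
  | succ n ih =>
      have hS : S (n+1+1) x = S (n+1) x + aa (n+1) * x ^ (n+1) :=
        Finset.sum_range_succ _ _
      have hD : D (n+1+1) x = D (n+1) x + aa (n+1) * (((n:ℝ)+1) * x ^ n) := by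
        rw [D, Finset.sum_range_succ, ← D]
        push_cast [Nat.succ_sub_one]
        ring
      rw [hS, hD, mul_add, ih]
      push_cast
      linear_combination x ^ n * aa_succ n

lemma S_nonneg (m : ℕ) (x : ℝ) (hx : 0 ≤ x) : 0 ≤ S m x :=
  Finset.sum_nonneg fun k _ => mul_nonneg (aa_nonneg k) (pow_nonneg hx k)

lemma S_zero (m : ℕ) : S (m+1) 0 = 1 := by
  simp [S, Finset.sum_range_succ', aa_zero, pow_succ]

lemma hasDerivAt_S (m : ℕ) (x : ℝ) : HasDerivAt (fun y => S m y) (D m x) x := by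
  have h : HasDerivAt (fun y => ∑ k ∈ Finset.range m, aa k * y ^ k)
      (∑ k ∈ Finset.range m, aa k * ((k : ℝ) * x ^ (k - 1))) x := by
    apply HasDerivAt.fun_sum
    intro k _
    exact (hasDerivAt_pow k x).const_mul (aa k)
  exact h

lemma hmain (n : ℕ) (x : ℝ) (hx0 : 0 ≤ x) (hx1 : x < 1) :
    (1 - x) ^ 5 * (S (n+1) x) ^ 2 ≤ 1 := by
  set f : ℝ → ℝ := fun y => (1 - y) ^ 5 * (S (n+1) y) ^ 2 with hf
  have hder : ∀ y, HasDerivAt f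
      (5 * (1-y)^4 * (-1) * (S (n+1) y)^2 + (1-y)^5 * (2 * S (n+1) y * D (n+1) y)) y := by
    intro y
    have h1 : HasDerivAt (fun y : ℝ => (1 - y) ^ 5) (5 * (1-y)^4 * (-1)) y := by
      have := ((hasDerivAt_id y).const_sub 1).fun_pow 5
      norm_num at this
      refine this.congr_deriv ?_
      ring
    have h2 : HasDerivAt (fun y => (S (n+1) y) ^ 2) (2 * S (n+1) y * D (n+1) y) y := by
      simpa using (hasDerivAt_S (n+1) y).fun_pow 2
    exact h1.mul h2
  have hdiff : Differentiable ℝ f := fun y => (hder y).differentiableAt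
  have hA : AntitoneOn f (Set.Icc 0 x) := by
    apply antitoneOn_of_deriv_nonpos (convex_Icc 0 x) hdiff.continuous.continuousOn
      hdiff.differentiableOn
    intro y hy
    rw [interior_Icc] at hy
    have hy0 : 0 ≤ y := hy.1.le
    have hy1 : 0 ≤ 1 - y := by have := hy.2; linarith
    rw [(hder y).deriv]
    have hS0 : 0 ≤ S (n+1) y := S_nonneg _ _ hy0
    have hrw : 5 * (1-y)^4 * (-1) * (S (n+1) y)^2 + (1-y)^5 * (2 * S (n+1) y * D (n+1) y)
        = (1-y)^4 * (2 * S (n+1) y * ((1-y) * D (n+1) y) - 5 * (S (n+1) y)^2) := by ring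
    rw [hrw, key n y]
    have heq : (1-y)^4 * (2 * S (n+1) y * (5/2 * S (n+1) y - ((n:ℝ) + 5/2) * aa n * y ^ n)
          - 5 * (S (n+1) y)^2)
        = -((1-y)^4 * ((2 * (((n:ℝ)+5/2) * aa n) * y ^ n) * S (n+1) y)) := by ring
    rw [heq, neg_nonpos]
    have hX : 0 ≤ ((n:ℝ)+5/2) * aa n := mul_nonneg (by positivity) (aa_nonneg n)
    exact mul_nonneg (pow_nonneg hy1 4)
      (mul_nonneg (mul_nonneg (mul_nonneg (by norm_num) hX) (pow_nonneg hy0 n)) hS0)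
  have h0m : (0:ℝ) ∈ Set.Icc 0 x := Set.left_mem_Icc.mpr hx0
  have hxm : x ∈ Set.Icc (0:ℝ) x := Set.right_mem_Icc.mpr hx0
  have := hA h0m hxm hx0
  simpa [hf, S_zero] using this

lemma ratio_bound (m k : ℕ) (hk : k < m) :
    0 ≤ poch (1 - (m:ℝ)) k / poch (2 - 4*(m:ℝ)) k ∧
    poch (1 - (m:ℝ)) k / poch (2 - 4*(m:ℝ)) k ≤ (1/3 : ℝ)^k := by
  have hnum : ∀ i ∈ Finset.range k, (1 - (m:ℝ) + i) ≤ 0 := by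
    intro i hi
    have hi' : i + 1 ≤ m := Nat.succ_le_of_lt ((Finset.mem_range.mp hi).trans hk)
    have : (i:ℝ) + 1 ≤ m := by exact_mod_cast hi'
    linarith
  have hden : ∀ i ∈ Finset.range k, (2 - 4*(m:ℝ) + i) ≤ 0 := by
    intro i hi
    have hi' : i + 1 ≤ m := Nat.succ_le_of_lt ((Finset.mem_range.mp hi).trans hk)
    have h1 : (i:ℝ) + 1 ≤ m := by exact_mod_cast hi'
    have h2 : (1:ℝ) ≤ m := by
      have : 1 ≤ m := Nat.one_le_of_lt (Nat.lt_of_le_of_lt (Nat.zero_le k) hk)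
      exact_mod_cast this
    linarith
  have hfac : ∀ i ∈ Finset.range k, 0 ≤ (1 - (m:ℝ) + i) / (2 - 4*(m:ℝ) + i) := by
    intro i hi
    rcases eq_or_lt_of_le (hden i hi) with h | h
    · rw [h, div_zero]
    · rw [div_nonneg_iff]; right; exact ⟨hnum i hi, h.le⟩
  rw [poch, poch, ← Finset.prod_div_distrib]
  constructor
  · exact Finset.prod_nonneg hfac
  · rw [show ((1:ℝ)/3)^k = ∏ _i ∈ Finset.range k, (1/3 : ℝ) by simp]
    apply Finset.prod_le_prod hfac
    intro i hi
    have hd : (2 - 4*(m:ℝ) + i) < 0 := by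
      rcases eq_or_lt_of_le (hden i hi) with h | h
      · exfalso
        have hi' : i + 1 ≤ m := Nat.succ_le_of_lt ((Finset.mem_range.mp hi).trans hk)
        have h1 : (i:ℝ) + 1 ≤ m := by exact_mod_cast hi'
        have h2 : (1:ℝ) ≤ m := by
          have : 1 ≤ m := Nat.one_le_of_lt (Nat.lt_of_le_of_lt (Nat.zero_le k) hk)
          exact_mod_cast this
        nlinarith
      · exact h
    rw [div_le_iff_of_neg hd]
    have h0i : (0:ℝ) ≤ i := Nat.cast_nonneg i
    have h0m : (0:ℝ) ≤ m := Nat.cast_nonneg m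
    linarith

/-- For `m ≥ 2` and `0 ≤ t ≤ 2`, `|₂F₁(5/2, 1−m; 2−4m; t)| ≤ 9√3 (3−t)^{−5/2}`. -/
theorem F_bound (m : ℕ) (hm : 2 ≤ m) (t : ℝ) (ht0 : 0 ≤ t) (ht2 : t ≤ 2) :
    |F m t| ≤ 9 * Real.sqrt 3 * (3 - t) ^ (-(5 : ℝ) / 2) := by
  obtain ⟨n, rfl⟩ : ∃ n, m = n + 1 := ⟨m - 1, by omega⟩
  have hx0 : 0 ≤ t / 3 := by linarith
  have hx1 : t / 3 < 1 := by linarith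
  -- termwise bound
  have hterm : ∀ k ∈ Finset.range (n+1),
      poch (5/2) k * poch (1 - ((n+1 : ℕ):ℝ)) k /
        (poch (2 - 4*((n+1 : ℕ):ℝ)) k * (Nat.factorial k : ℝ)) * t ^ k
      = aa k * (poch (1 - ((n+1 : ℕ):ℝ)) k / poch (2 - 4*((n+1 : ℕ):ℝ)) k) * t ^ k := by
    intro k _
    rw [aa]; ring
  have hF0 : 0 ≤ F (n+1) t := by
    rw [F]
    apply Finset.sum_nonneg
    intro k hk
    rw [hterm k hk]
    obtain ⟨hr0, _⟩ := ratio_bound (n+1) k (Finset.mem_range.mp hk)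
    exact mul_nonneg (mul_nonneg (aa_nonneg k) hr0) (pow_nonneg ht0 k)
  have hFS : F (n+1) t ≤ S (n+1) (t/3) := by
    rw [F, S]
    apply Finset.sum_le_sum
    intro k hk
    rw [hterm k hk]
    obtain ⟨hr0, hr3⟩ := ratio_bound (n+1) k (Finset.mem_range.mp hk)
    have : aa k * (poch (1 - ((n+1 : ℕ):ℝ)) k / poch (2 - 4*((n+1 : ℕ):ℝ)) k) * t ^ k
        ≤ aa k * (1/3 : ℝ)^k * t ^ k :=
      mul_le_mul_of_nonneg_right (mul_le_mul_of_nonneg_left hr3 (aa_nonneg k))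
        (pow_nonneg ht0 k)
    refine this.trans (le_of_eq ?_)
    rw [show t/3 = (1/3) * t by ring, mul_pow]
    ring
  -- analytic bound
  have h5 := hmain n (t/3) hx0 hx1
  have hApos : (0:ℝ) < 3 - t := by linarith
  set R : ℝ := 9 * Real.sqrt 3 * (3 - t) ^ (-(5 : ℝ) / 2) with hR
  have hR0 : 0 ≤ R := by
    apply mul_nonneg (by positivity)
    exact (Real.rpow_pos_of_pos hApos _).le
  have hRsq : R ^ 2 = 243 * ((3 - t) ^ (5:ℕ))⁻¹ := by
    have e1 : ((3 - t) ^ (-(5 : ℝ) / 2)) ^ 2 = (3 - t) ^ (-(5:ℝ)) := by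
      rw [sq, ← Real.rpow_add hApos]; norm_num
    have e2 : (3 - t) ^ (-(5:ℝ)) = ((3 - t) ^ (5:ℕ))⁻¹ := by
      rw [show (-(5:ℝ)) = -((5:ℕ):ℝ) by norm_num, Real.rpow_neg hApos.le, Real.rpow_natCast]
    have e3 : Real.sqrt 3 ^ 2 = 3 := Real.sq_sqrt (by norm_num)
    rw [hR, mul_pow, mul_pow, e1, e2, e3]
    norm_num
  have hS0 : 0 ≤ S (n+1) (t/3) := S_nonneg _ _ hx0
  have h5' : (3 - t) ^ (5:ℕ) * (S (n+1) (t/3)) ^ 2 ≤ 243 := by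
    have e : (1 - t/3) = (3 - t)/3 := by ring
    rw [e, div_pow] at h5
    nlinarith [h5]
  have hsq : (S (n+1) (t/3)) ^ 2 ≤ R ^ 2 := by
    rw [hRsq]
    rw [show (243:ℝ) * ((3 - t) ^ (5:ℕ))⁻¹ = 243 / (3 - t) ^ (5:ℕ) by ring,
      le_div_iff₀ (by positivity)]
    linarith [h5']
  have hSR : S (n+1) (t/3) ≤ R := by
    have := Real.sqrt_le_sqrt hsq
    rwa [Real.sqrt_sq hS0, Real.sqrt_sq hR0] at this
  rw [abs_of_nonneg hF0]
  exact (hFS.trans hSR)
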